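/- Let $X$ be a Noetherian topological space, let $M$ be a subsheaf of a sheaf of abelian groups on $X$, and more generally let $\kappa$ be an infinite cardinal with the set of open subsets of $X$ of cardinality at most $\kappa$. If $G$ is a sheaf of abelian groups on $X$ with $|G(U)| \le \kappa$ for every open $U$, then every subsheaf $M \subseteq G$ and every quotient of such a subsheaf $M$ by a subsheaf $N \subseteq M$ (the cokernel of $N \to M$ in sheaves of abelian groups) has all section groups of cardinality at most $\kappa$: $|M(U)| \le \kappa$ and $|(M/N)(U)| \le \kappa$ for every open $U \subseteq X$. -/

import Mathlib

open CategoryTheory CategoryTheory.Limits TopologicalSpace Cardinal Opposite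

/-!
A monomorphism of sheaves of abelian groups is injective on sections, which bounds `M`.
The cokernel map `M ⟶ M/N` is locally surjective, and every open `U` of a Noetherian space is
quasi-compact, so a section of `M/N` over `U` is determined by finitely many local preimages in
`M`, taken over finitely many opens covering `U`. These are finite lists drawn from
`Σ V, M(V)`, a set of size at most `#(Opens X) * κ = κ`.
-/

universe u v w

lemma Cardinal.mk_sigma_le_of_le {ι : Type u} {f : ι → Type u} {κ : Cardinal.{u}}
    (hκ : ℵ₀ ≤ κ) (hι : #ι ≤ κ) (hf : ∀ i, #(f i) ≤ κ) : #(Σ i, f i) ≤ κ :=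
  calc #(Σ i, f i) = sum fun i => #(f i) := mk_sigma f
    _ ≤ sum fun _ : ι => κ := sum_le_sum _ _ hf
    _ = #ι * κ := sum_const' ι κ
    _ ≤ κ * κ := mul_le_mul_left hι κ
    _ = κ := mul_eq_self hκ

lemma CategoryTheory.Sheaf.mk_obj_le_of_mono {C : Type*} [Category C] {J : GrothendieckTopology C}
    [HasWeakSheafify J AddCommGrpCat.{w}] {M G : Sheaf J AddCommGrpCat.{w}} (ι : M ⟶ G) [Mono ι]
    (U : Cᵒᵖ) : #(M.obj.obj U) ≤ #(G.obj.obj U) :=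
  mk_le_of_injective ((AddCommGrpCat.mono_iff_injective (ι.hom.app U)).1 inferInstance)

namespace TopCat.Presheaf

variable {X : TopCat.{u}} {D : Type v} [Category.{u} D] {FD : D → D → Type*} {CD : D → Type u}
  [∀ X Y, FunLike (FD X Y) (CD X) (CD Y)] [ConcreteCategory.{u} D FD]
  {A B : Presheaf D X}

def IsFiniteLocalLift (π : A ⟶ B) {U : Opens X} (s : ToType (B.obj (op U)))
    (l : List (Σ V : Opens X, ToType (A.obj (op V)))) : Prop :=
  (∀ p ∈ l, ∃ f : p.1 ⟶ U, π.app (op p.1) p.2 = B.map f.op s) ∧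
    (U : Set X) ⊆ ⋃ p ∈ l, (p.1 : Set X)

lemma exists_isFiniteLocalLift [NoetherianSpace X] (π : A ⟶ B)
    [CategoryTheory.Presheaf.IsLocallySurjective (Opens.grothendieckTopology X) π] {U : Opens X}
    (s : ToType (B.obj (op U))) : ∃ l, IsFiniteLocalLift π s l := by
  let W := {V : Opens X // ∃ f : V ⟶ U, (CategoryTheory.Presheaf.imageSieve π s).arrows f}
  have hcover : (U : Set X) ⊆ ⋃ V : W, (V.1 : Set X) := fun x hx => by
    obtain ⟨V, f, hf, hxV⟩ :=
      CategoryTheory.Presheaf.imageSieve_mem (Opens.grothendieckTopology X) π s x hx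
    exact Set.mem_iUnion.2 ⟨⟨V, f, hf⟩, hxV⟩
  obtain ⟨t, ht⟩ := (NoetherianSpace.isCompact (U : Set X)).elim_finite_subcover
    (fun V : W => (V.1 : Set X)) (fun V => V.1.isOpen) hcover
  refine ⟨t.toList.map fun V => ⟨V.1, V.2.choose_spec.choose⟩, ?_, fun x hx => ?_⟩
  · simp only [List.mem_map, Finset.mem_toList]
    rintro _ ⟨V, -, rfl⟩
    exact ⟨V.2.choose, V.2.choose_spec.choose_spec⟩
  · obtain ⟨V, hVt, hxV⟩ := Set.mem_iUnion₂.1 (ht hx)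
    exact Set.mem_biUnion (List.mem_map.2 ⟨V, Finset.mem_toList.2 hVt, rfl⟩) hxV

variable [HasLimits D] [(forget D).ReflectsIsomorphisms] [PreservesLimits (forget D)]

lemma eq_of_isFiniteLocalLift {B : TopCat.Sheaf D X} (π : A ⟶ B.obj) {U : Opens X}
    {s₁ s₂ : ToType (B.obj.obj (op U))} {l : List (Σ V : Opens X, ToType (A.obj (op V)))}
    (h₁ : IsFiniteLocalLift π s₁ l) (h₂ : IsFiniteLocalLift π s₂ l) : s₁ = s₂ := by
  choose f₁ hf₁ using h₁.1
  refine B.eq_of_locally_eq' (fun p : {p // p ∈ l} => p.1.1) U (fun p => f₁ p.1 p.2)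
    (fun x hx => ?_) s₁ s₂ fun p => ?_
  · obtain ⟨p, hp, hxp⟩ := Set.mem_iUnion₂.1 (h₁.2 hx)
    exact Opens.mem_iSup.2 ⟨⟨p, hp⟩, hxp⟩
  · obtain ⟨f₂, hf₂⟩ := h₂.1 p.1 p.2
    rw [← hf₁, Subsingleton.elim (f₁ p.1 p.2) f₂, hf₂]

lemma mk_obj_le_of_isLocallySurjective [NoetherianSpace X] {B : TopCat.Sheaf D X} (π : A ⟶ B.obj)
    [CategoryTheory.Presheaf.IsLocallySurjective (Opens.grothendieckTopology X) π]
    (U : Opens X) :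
    #(ToType (B.obj.obj (op U))) ≤ max ℵ₀ #(Σ V : Opens X, ToType (A.obj (op V))) := by
  choose l hl using exists_isFiniteLocalLift π (U := U)
  have hl_inj : Function.Injective l := fun s₁ s₂ h =>
    eq_of_isFiniteLocalLift π (hl s₁) (h ▸ hl s₂)
  exact (mk_le_of_injective hl_inj).trans (mk_list_le_max _)

end TopCat.Presheaf

theorem card_sections_subquotient_le_general (X : TopCat) [NoetherianSpace X]
    (κ : Cardinal) (hκ : Cardinal.aleph0 ≤ κ) (hOp : #(Opens X) ≤ κ)
    (G M N : Sheaf (Opens.grothendieckTopology X) AddCommGrpCat)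
    (hG : ∀ U : Opens X, #(G.val.obj (op U)) ≤ κ)
    (ι : M ⟶ G) [Mono ι] (ν : N ⟶ M) :
    (∀ U : Opens X, #(M.val.obj (op U)) ≤ κ) ∧
      (∀ U : Opens X, #((cokernel ν).val.obj (op U)) ≤ κ) := by
  have hM : ∀ U : Opens X, #(M.val.obj (op U)) ≤ κ := fun U =>
    (Sheaf.mk_obj_le_of_mono ι (op U)).trans (hG U)
  refine ⟨hM, fun U => ?_⟩
  have : Sheaf.IsLocallySurjective (cokernel.π ν) :=
    (Sheaf.isLocallySurjective_iff_epi' _ _).2 inferInstance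
  exact (TopCat.Presheaf.mk_obj_le_of_isLocallySurjective (cokernel.π ν).hom U).trans
    (max_le hκ (mk_sigma_le_of_le hκ hOp hM))

/-- Let `X` be a Noetherian topological space and `κ` an infinite
cardinal such that the set of opens of `X` has cardinality at most `κ`. If `G` is a
sheaf of abelian groups on `X` with `|G(U)| ≤ κ` for every open `U`, then every
subsheaf `M ⊆ G` and every quotient `M/N` of `M` by a subsheaf `N ⊆ M` has all
section groups of cardinality at most `κ`: `|M(U)| ≤ κ` and `|(M/N)(U)| ≤ κ` for
every open `U ⊆ X`. -/
theorem card_sections_subquotient_le (X : TopCat) [NoetherianSpace X]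
    (κ : Cardinal) (hκ : Cardinal.aleph0 ≤ κ) (hOp : #(Opens X) ≤ κ)
    (G M N : Sheaf (Opens.grothendieckTopology X) AddCommGrpCat)
    (hG : ∀ U : Opens X, #(G.val.obj (op U)) ≤ κ)
    (ι : M ⟶ G) [Mono ι] (ν : N ⟶ M) [Mono ν] :
    (∀ U : Opens X, #(M.val.obj (op U)) ≤ κ) ∧
      (∀ U : Opens X, #((cokernel ν).val.obj (op U)) ≤ κ) :=
  card_sections_subquotient_le_general X κ hκ hOp G M N hG ι ν
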